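/- Let F = GF(3^n) and f = Inv ∘ (1, γ) with γ ∈ F \ {0, 1}, i.e., f(1) = Inv(γ), f(γ) = 1, f(x) = x^(3^n-2) otherwise. If x ∉ {0, 1, γ, a, 1+a, γ+a, -a, 1-a, γ-a} and a ∉ {0}, then f(x+a) + f(x-a) + f(x) ≠ 0. -/

import Mathlib

/-
Away from the swapped points {1, γ} and from 0, f is field inversion, and the hypothesis on x keeps
x, x + a, x - a away from {0, 1, γ}. Over the common denominator x(x + a)(x - a), the sum of the
three inverses has numerator 3x² - a², which in characteristic 3 is -a² ≠ 0.
-/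

theorem FiniteField.pow_card_sub_two_eq_inv {K : Type*} [Field K] [Fintype K] {x : K}
    (hx : x ≠ 0) : x ^ (Fintype.card K - 2) = x⁻¹ := by
  have hcard : 2 ≤ Fintype.card K := Fintype.one_lt_card
  refine eq_inv_of_mul_eq_one_left ?_
  rw [← pow_succ, show Fintype.card K - 2 + 1 = Fintype.card K - 1 by omega]
  exact FiniteField.pow_card_sub_one_eq_one x hx

theorem inv_add_inv_add_inv_ne_zero_of_charP_three {K : Type*} [Field K] [CharP K 3] {x a : K}
    (ha : a ≠ 0) (hx : x ≠ 0) (hxa : x + a ≠ 0) (hxa' : x - a ≠ 0) :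
    (x + a)⁻¹ + (x - a)⁻¹ + x⁻¹ ≠ 0 := by
  have h3 : (3 : K) = 0 := by exact_mod_cast CharP.cast_eq_zero K 3
  have hsum : (x + a)⁻¹ + (x - a)⁻¹ + x⁻¹ = -a ^ 2 / ((x + a) * (x - a) * x) := by
    field_simp
    linear_combination x ^ 2 * h3
  rw [hsum]
  exact div_ne_zero (neg_ne_zero.mpr (pow_ne_zero 2 ha)) (by positivity)

theorem stmt_19_general {F : Type*} [Field F] [Fintype F] [DecidableEq F] {n : ℕ}
    (hF : Fintype.card F = 3 ^ n)
    (γ : F)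
    (f : F → F)
    (hf : f = fun x => if x = 1 then γ ^ (3 ^ n - 2)
                        else if x = γ then 1 else x ^ (3 ^ n - 2))
    (a : F) (ha : a ≠ 0) (x : F)
    (hx : x ∉ ({0, 1, γ, a, 1 + a, γ + a, -a, 1 - a, γ - a} : Set F)) :
    f (x + a) + f (x - a) + f x ≠ 0 := by
  have : CharP F 3 := charP_of_card_eq_prime_pow hF
  have hf_inv : ∀ y : F, y ≠ 0 → y ≠ 1 → y ≠ γ → f y = y⁻¹ := fun y h0 h1 hγ => by
    simp only [hf, if_neg h1, if_neg hγ, ← hF, FiniteField.pow_card_sub_two_eq_inv h0]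
  simp only [Set.mem_insert_iff, Set.mem_singleton_iff, not_or] at hx
  obtain ⟨hx0, hx1, hxγ, hxa, hx1a, hxγa, hxna, hx1na, hxγna⟩ := hx
  have hxa0 : x + a ≠ 0 := fun h => hxna (by linear_combination h)
  have hxa'0 : x - a ≠ 0 := fun h => hxa (by linear_combination h)
  rw [hf_inv (x + a) hxa0 (fun h => hx1na (by linear_combination h))
      (fun h => hxγna (by linear_combination h)),
    hf_inv (x - a) hxa'0 (fun h => hx1a (by linear_combination h))
      (fun h => hxγa (by linear_combination h)),
    hf_inv x hx0 hx1 hxγ]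
  exact inv_add_inv_add_inv_ne_zero_of_charP_three ha hx0 hxa0 hxa'0

theorem stmt_19 {F : Type*} [Field F] [Fintype F] [DecidableEq F] {n : ℕ}
    (hn : 0 < n) (hF : Fintype.card F = 3 ^ n)
    (γ : F) (hγ0 : γ ≠ 0) (hγ1 : γ ≠ 1)
    (f : F → F)
    (hf : f = fun x => if x = 1 then γ ^ (3 ^ n - 2)
                        else if x = γ then 1 else x ^ (3 ^ n - 2))
    (a : F) (ha : a ≠ 0) (x : F)
    (hx : x ∉ ({0, 1, γ, a, 1 + a, γ + a, -a, 1 - a, γ - a} : Set F)) :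
    f (x + a) + f (x - a) + f x ≠ 0 :=
  stmt_19_general hF γ f hf a ha x hx
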